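/- Let C and C' be nontrivial codes in the Hamming graphs H(n,q) and H(n',q') respectively. If the product code C × C' is completely regular in the Cartesian product graph H(n,q) × H(n',q'), then both C and C' are completely regular codes in their respective Hamming graphs. -/

import Mathlib

open SimpleGraph

/-- The Hamming graph on `Fin n → Q`: words adjacent iff they differ in one coordinate. -/
def hammingGraph (n : ℕ) (Q : Type*) [DecidableEq Q] : SimpleGraph (Fin n → Q) where
  Adj x y := hammingDist x y = 1
  symm := ⟨fun x y h => by show hammingDist y x = 1; rw [hammingDist_comm]; exact h⟩
  loopless := ⟨fun x h => by have h : hammingDist x x = 1 := h; rw [hammingDist_self] at h; exact absurd h.symm one_ne_zero⟩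

/-- Distance from a vertex to a code, via graph distance. -/
noncomputable def distToCode {V : Type*} (G : SimpleGraph V) (C : Set V) (x : V) : ℕ :=
  sInf {d | ∃ c ∈ C, G.dist x c = d}

/-- The `i`-th cell of the distance partition of a code. -/
noncomputable def codeCell {V : Type*} (G : SimpleGraph V) (C : Set V) (i : ℕ) : Set V :=
  {x | distToCode G C x = i}

/-- The number of neighbors of `x` lying in `S`. -/
noncomputable def nbrCount {V : Type*} (G : SimpleGraph V) (x : V) (S : Set V) : ℕ :=
  (G.neighborSet x ∩ S).ncard

/-- Covering radius of a code. -/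
noncomputable def covRad {V : Type*} (G : SimpleGraph V) (C : Set V) : ℕ :=
  sSup {d | ∃ x, distToCode G C x = d}

/-- A code is completely regular if its distance partition is equitable. -/
def IsCompRegCode {V : Type*} (G : SimpleGraph V) (C : Set V) : Prop :=
  ∀ i j : ℕ, ∀ x ∈ codeCell G C i, ∀ y ∈ codeCell G C i,
    nbrCount G x (codeCell G C j) = nbrCount G y (codeCell G C j)

/-- Intersection numbers `γ, α, β` of a code with covering radius `ρ`. -/
def HasIntNums {V : Type*} (G : SimpleGraph V) (C : Set V) (ρ : ℕ) (γ α β : ℕ → ℕ) : Prop :=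
  γ 0 = 0 ∧ β ρ = 0 ∧
  ∀ i ≤ ρ, ∀ x ∈ codeCell G C i,
    (1 ≤ i → nbrCount G x (codeCell G C (i-1)) = γ i) ∧
    nbrCount G x (codeCell G C i) = α i ∧
    (i < ρ → nbrCount G x (codeCell G C (i+1)) = β i)

/-- Equitable partition of the vertex set of a graph. -/
def IsEquitable {V : Type*} (G : SimpleGraph V) (Pa : Set (Set V)) : Prop :=
  ∀ P ∈ Pa, ∀ P' ∈ Pa, ∀ x ∈ P, ∀ y ∈ P, nbrCount G x P' = nbrCount G y P'

/-- Quotient graph of a graph by a partition of its vertex set. -/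
def quotientGraph {V : Type*} (G : SimpleGraph V) (Pa : Set (Set V)) : SimpleGraph Pa where
  Adj P P' := P ≠ P' ∧ ∃ x ∈ (P : Set V), ∃ y ∈ (P' : Set V), G.Adj x y
  symm := ⟨by
    rintro P P' ⟨hne, x, hx, y, hy, hxy⟩
    exact ⟨hne.symm, y, hy, x, hx, hxy.symm⟩⟩
  loopless := ⟨by rintro P ⟨hne, -⟩; exact hne rfl⟩

/-- Completely regular partition with common intersection numbers. -/
def IsCompRegPartition {V : Type*} (G : SimpleGraph V) (Pa : Set (Set V))
    (ρ : ℕ) (γ α β : ℕ → ℕ) : Prop :=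
  Setoid.IsPartition Pa ∧ IsEquitable G Pa ∧
    ∀ P ∈ Pa, IsCompRegCode G P ∧ covRad G P = ρ ∧ HasIntNums G P ρ γ α β

/-- Distance-regular graph of diameter `D` with intersection arrays `b`, `c`. -/
def IsDistRegular {V : Type*} (G : SimpleGraph V) (D : ℕ) (b c : ℕ → ℕ) : Prop :=
  G.Connected ∧ (∀ x y : V, G.dist x y ≤ D) ∧ (∃ x y : V, G.dist x y = D) ∧
  ∀ i ≤ D, ∀ x y : V, G.dist x y = i →
    (1 ≤ i → nbrCount G y {z | G.dist x z = i - 1} = c i) ∧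
    (i < D → nbrCount G y {z | G.dist x z = i + 1} = b i)

/-- The tridiagonal quotient matrix of a completely regular code. -/
noncomputable def quotMatrix (ρ : ℕ) (γ α β : ℕ → ℕ) : Matrix (Fin (ρ+1)) (Fin (ρ+1)) ℝ :=
  Matrix.of fun i j =>
    if (j : ℕ) + 1 = (i : ℕ) then (γ (i : ℕ) : ℝ)
    else if (i : ℕ) = (j : ℕ) then (α (i : ℕ) : ℝ)
    else if (i : ℕ) + 1 = (j : ℕ) then (β (i : ℕ) : ℝ)
    else 0

/-! Distances in a box product add up, so the distance from `(x, x')` to `C × C'` is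
`d(x, C) + d(x', C')`. Fixing the second coordinate at a codeword `c' ∈ C'` therefore embeds the
distance partition of `C` into that of `C × C'`. The neighbours of `(x, c')` split into those that
move `x` and those that move `c'`; the former are counted by the distance partition of `C`, and
the count of the latter depends only on `d(x, C)`. Cancelling it, equitability of the product
partition gives equitability of that of `C`; the other factor follows by swapping. -/

lemma hammingDist_update_le {ι : Type*} [Fintype ι] [DecidableEq ι] {β : ι → Type*}
    [∀ i, DecidableEq (β i)] (x : ∀ i, β i) (i : ι) (a : β i) :
    hammingDist x (Function.update x i a) ≤ 1 :=
  calc hammingDist x (Function.update x i a) ≤ ({i} : Finset ι).card :=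
        Finset.card_le_card fun j hj => by
          by_contra hji
          simp_all [Function.update_of_ne (Finset.notMem_singleton.mp hji)]
    _ = 1 := Finset.card_singleton i

lemma hammingGraph_reachable_update {n : ℕ} {Q : Type*} [DecidableEq Q] (x : Fin n → Q)
    (i : Fin n) (a : Q) : (hammingGraph n Q).Reachable x (Function.update x i a) := by
  rcases (hammingDist_update_le x i a).eq_or_lt with h | h
  · exact Adj.reachable h
  · rw [← hammingDist_lt_one.mp h]

lemma hammingGraph_preconnected (n : ℕ) (Q : Type*) [DecidableEq Q] :
    (hammingGraph n Q).Preconnected := by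
  intro x y
  have hpiecewise : ∀ s : Finset (Fin n), (hammingGraph n Q).Reachable x (s.piecewise y x) := by
    intro s
    induction s using Finset.induction_on with
    | empty => rw [Finset.piecewise_empty]
    | insert i s _ ih =>
      rw [Finset.piecewise_insert]
      exact ih.trans (hammingGraph_reachable_update _ i (y i))
  simpa using hpiecewise Finset.univ

namespace SimpleGraph

variable {α β : Type*} {G : SimpleGraph α} {H : SimpleGraph β}

lemma dist_boxProd (hG : G.Preconnected) (hH : H.Preconnected) (p q : α × β) :
    (G □ H).dist p q = G.dist p.1 q.1 + H.dist p.2 q.2 := by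
  rw [dist, dist, dist, edist_boxProd]
  exact ENat.toNat_add (edist_ne_top_iff_reachable.mpr (hG _ _))
    (edist_ne_top_iff_reachable.mpr (hH _ _))

lemma nbrCount_boxProd [Finite α] [Finite β] (p : α × β) (S : Set (α × β)) :
    nbrCount (G □ H) p S =
      nbrCount G p.1 ((·, p.2) ⁻¹' S) + nbrCount H p.2 ((p.1, ·) ⁻¹' S) := by
  rw [nbrCount, neighborSet_boxProd, Set.union_inter_distrib_right, Set.ncard_union_eq,
    Set.prod_singleton, Set.singleton_prod, ← Set.image_inter_preimage,
    ← Set.image_inter_preimage, Set.ncard_image_of_injective _ (Prod.mk_left_injective _),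
    Set.ncard_image_of_injective _ (Prod.mk_right_injective _), nbrCount, nbrCount]
  rw [Set.disjoint_left]
  rintro ⟨a, b⟩ ⟨⟨ha, -⟩, -⟩ ⟨⟨rfl, -⟩, -⟩
  exact G.irrefl ha

end SimpleGraph

section DistanceToCode

variable {α β : Type*} {G : SimpleGraph α} {H : SimpleGraph β}

lemma distToCode_le_dist {C : Set α} {c : α} (hc : c ∈ C) (x : α) :
    distToCode G C x ≤ G.dist x c :=
  Nat.sInf_le ⟨c, hc, rfl⟩

lemma exists_mem_dist_eq_distToCode {C : Set α} (hC : C.Nonempty) (x : α) :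
    ∃ c ∈ C, G.dist x c = distToCode G C x :=
  Nat.sInf_mem (hC.image (G.dist x))

lemma distToCode_eq_zero_of_mem {C : Set α} {c : α} (hc : c ∈ C) : distToCode G C c = 0 :=
  Nat.eq_zero_of_le_zero ((distToCode_le_dist hc c).trans_eq G.dist_self)

lemma distToCode_boxProd (hG : G.Preconnected) (hH : H.Preconnected)
    {C : Set α} {C' : Set β} (hC : C.Nonempty) (hC' : C'.Nonempty) (p : α × β) :
    distToCode (G □ H) (C ×ˢ C') p = distToCode G C p.1 + distToCode H C' p.2 := by
  apply le_antisymm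
  · obtain ⟨c, hc, hdc⟩ := exists_mem_dist_eq_distToCode (G := G) hC p.1
    obtain ⟨c', hc', hdc'⟩ := exists_mem_dist_eq_distToCode (G := H) hC' p.2
    calc distToCode (G □ H) (C ×ˢ C') p ≤ (G □ H).dist p (c, c') :=
          distToCode_le_dist (Set.mk_mem_prod hc hc') p
      _ = distToCode G C p.1 + distToCode H C' p.2 := by rw [dist_boxProd hG hH, hdc, hdc']
  · obtain ⟨q, hq, hdq⟩ := exists_mem_dist_eq_distToCode (G := G □ H) (hC.prod hC') p
    rw [← hdq, dist_boxProd hG hH]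
    exact add_le_add (distToCode_le_dist hq.1 _) (distToCode_le_dist hq.2 _)

lemma mem_codeCell_boxProd (hG : G.Preconnected) (hH : H.Preconnected)
    {C : Set α} {C' : Set β} (hC : C.Nonempty) (hC' : C'.Nonempty) {p : α × β} {k : ℕ} :
    p ∈ codeCell (G □ H) (C ×ˢ C') k ↔ distToCode G C p.1 + distToCode H C' p.2 = k := by
  rw [codeCell, Set.mem_ofPred_eq, distToCode_boxProd hG hH hC hC']

end DistanceToCode

namespace IsCompRegCode

variable {α β : Type*} [Finite α] [Finite β] {G : SimpleGraph α} {H : SimpleGraph β}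
  {C : Set α} {C' : Set β}

lemma boxProd_comm (hG : G.Preconnected) (hH : H.Preconnected) (hC : C.Nonempty)
    (hC' : C'.Nonempty) (hprod : IsCompRegCode (G □ H) (C ×ˢ C')) :
    IsCompRegCode (H □ G) (C' ×ˢ C) := by
  have hcell : ∀ k, codeCell (H □ G) (C' ×ˢ C) k = Prod.swap ⁻¹' codeCell (G □ H) (C ×ˢ C') k :=
    fun k => Set.ext fun p => by
      rw [Set.mem_preimage, mem_codeCell_boxProd hH hG hC' hC,
        mem_codeCell_boxProd hG hH hC hC', Prod.fst_swap, Prod.snd_swap, add_comm]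
  have hnbr : ∀ p S, nbrCount (H □ G) p (Prod.swap ⁻¹' S) = nbrCount (G □ H) p.swap S :=
    fun p S => by rw [nbrCount_boxProd, nbrCount_boxProd, add_comm]; rfl
  intro i j p hp q hq
  rw [hcell] at hp hq
  rw [hcell, hnbr, hnbr]
  exact hprod i j _ hp _ hq

lemma of_boxProd_left (hG : G.Preconnected) (hH : H.Preconnected) (hC : C.Nonempty)
    (hC' : C'.Nonempty) (hprod : IsCompRegCode (G □ H) (C ×ˢ C')) : IsCompRegCode G C := by
  obtain ⟨c', hc'⟩ := hC'
  have hslice : ∀ k, (·, c') ⁻¹' codeCell (G □ H) (C ×ˢ C') k = codeCell G C k :=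
    fun k => Set.ext fun u => by
      rw [Set.mem_preimage, mem_codeCell_boxProd hG hH hC ⟨c', hc'⟩,
        distToCode_eq_zero_of_mem hc', add_zero]
      rfl
  intro i j x hx y hy
  have key := hprod i j (x, c') (by rwa [← hslice] at hx) (y, c') (by rwa [← hslice] at hy)
  have htransverse : (x, ·) ⁻¹' codeCell (G □ H) (C ×ˢ C') j =
      (y, ·) ⁻¹' codeCell (G □ H) (C ×ˢ C') j :=
    Set.ext fun u' => by
      simp only [Set.mem_preimage, mem_codeCell_boxProd hG hH hC ⟨c', hc'⟩]
      rw [show distToCode G C x = i from hx, show distToCode G C y = i from hy]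
  rw [nbrCount_boxProd, nbrCount_boxProd, hslice, htransverse] at key
  exact Nat.add_right_cancel key

end IsCompRegCode

/-- if the product of two nontrivial codes is completely regular in the
product of Hamming graphs, then both factors are completely regular. -/
theorem product_compRegular_implies_factors {n q n' q' : ℕ}
    (C : Set (Fin n → Fin q)) (C' : Set (Fin n' → Fin q'))
    (hCnt : C.Nontrivial ∧ C ≠ Set.univ)
    (hC'nt : C'.Nontrivial ∧ C' ≠ Set.univ)
    (hprod : IsCompRegCode (hammingGraph n (Fin q) □ hammingGraph n' (Fin q')) (C ×ˢ C')) :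
    IsCompRegCode (hammingGraph n (Fin q)) C ∧ IsCompRegCode (hammingGraph n' (Fin q')) C' := by
  have hC := hCnt.1.nonempty
  have hC' := hC'nt.1.nonempty
  have hG := hammingGraph_preconnected n (Fin q)
  have hH := hammingGraph_preconnected n' (Fin q')
  exact ⟨hprod.of_boxProd_left hG hH hC hC',
    (hprod.boxProd_comm hG hH hC hC').of_boxProd_left hH hG hC' hC⟩
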